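/- For every real ν with −1/2 < ν ≤ 1/2 and ν ≠ 0, one has P^{(ν)}_n(1) > 0 for all n ≥ 1, and the sequence n ↦ Q^{(ν)}_{n−1}(1)/P^{(ν)}_n(1) tends to +∞ as n → ∞ (in particular it is unbounded). -/

import Mathlib

open Polynomial Filter MeasureTheory

noncomputable section

/-- Recurrence coefficients `β_k = k(k+2ν−1)/(4(k+ν)(k+ν−1))` of the monic
ultraspherical polynomials. -/
def ultraBeta (ν : ℝ) (k : ℕ) : ℝ :=
  k * (k + 2 * ν - 1) / (4 * (k + ν) * (k + ν - 1))

/-- Monic ultraspherical polynomials `P^{(ν)}_0 = 1`, `P^{(ν)}_1 = X`,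
`P^{(ν)}_{k+1} = X·P^{(ν)}_k − β_k·P^{(ν)}_{k−1}`. -/
def ultraP (ν : ℝ) : ℕ → Polynomial ℝ
  | 0 => 1
  | 1 => X
  | (k + 2) => X * ultraP ν (k + 1) - C (ultraBeta ν (k + 1)) * ultraP ν k

/-- First-order numerator polynomials `Q^{(ν)}_0 = 1`, `Q^{(ν)}_1 = X`,
`Q^{(ν)}_{k+1} = X·Q^{(ν)}_k − β_{k+1}·Q^{(ν)}_{k−1}`. -/
def ultraQ (ν : ℝ) : ℕ → Polynomial ℝ
  | 0 => 1
  | 1 => X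
  | (k + 2) => X * ultraQ ν (k + 1) - C (ultraBeta ν (k + 2)) * ultraQ ν k

/-- Co-dilated ultraspherical polynomials: same recurrence as `ultraP ν`, except that
the single coefficient `β_1` is replaced by `λ·β_1`. -/
def ultraPstar (ν lam : ℝ) : ℕ → Polynomial ℝ
  | 0 => 1
  | 1 => X
  | (k + 2) => X * ultraPstar ν lam (k + 1) -
      C (if k + 1 = 1 then lam * ultraBeta ν 1 else ultraBeta ν (k + 1)) * ultraPstar ν lam k

/-!
At `X = 1` the recurrence for `P^{(ν)}` telescopes to `P_{n+1}(1) = (n+2ν)/(2(n+ν)) · P_n(1)`,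
which is positive for `ν > -1/2`. The Casoratian `Q_{m+1}P_{m+1} - Q_m P_{m+2}` gets multiplied
by `β_{m+2}` at each step, so the increments `d_m` of `Q_m(1)/P_{m+1}(1)` satisfy
`d_{m+1} = (m+2)/(m+2+2ν) · d_m` with `d_0 = 1/(1+2ν)`. For `ν ≤ 1/2` this gives
`d_m ≥ 1/(m+2)`, and the quotients dominate the divergent harmonic series.
-/

namespace Ultraspherical

variable {ν : ℝ}

lemma ultraP_eval_one_add_two (ν : ℝ) (k : ℕ) :
    (ultraP ν (k + 2)).eval 1 =
      (ultraP ν (k + 1)).eval 1 - ultraBeta ν (k + 1) * (ultraP ν k).eval 1 := by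
  simp [ultraP]

lemma ultraBeta_succ (ν : ℝ) (n : ℕ) :
    ultraBeta ν (n + 1) = (n + 1) * (n + 2 * ν) / (4 * (n + 1 + ν) * (n + ν)) := by
  simp only [ultraBeta]
  push_cast
  ring_nf

lemma ultraP_eval_one_succ (hν : -1 < ν) (hν₀ : ν ≠ 0) {n : ℕ} (hn : 1 ≤ n) :
    (ultraP ν (n + 1)).eval 1 = (n + 2 * ν) / (2 * (n + ν)) * (ultraP ν n).eval 1 := by
  induction n, hn using Nat.le_induction with
  | base =>
    have h1ν : 1 + ν ≠ 0 := by linarith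
    simp only [ultraP_eval_one_add_two, ultraBeta_succ]
    simp only [ultraP, eval_X, eval_one, Nat.cast_zero, Nat.cast_one, zero_add, one_mul, mul_one]
    field_simp
    ring
  | succ n hn ih =>
    have hn' : (1 : ℝ) ≤ n := by exact_mod_cast hn
    have hA : (n : ℝ) + ν ≠ 0 := by linarith
    have hB : (n : ℝ) + 1 + ν ≠ 0 := by linarith
    rw [ultraP_eval_one_add_two, ih, ultraBeta_succ]
    push_cast
    field_simp
    ring

lemma ultraP_eval_one_pos (hν : -(1 / 2) < ν) (hν₀ : ν ≠ 0) {n : ℕ} (hn : 1 ≤ n) :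
    0 < (ultraP ν n).eval 1 := by
  induction n, hn using Nat.le_induction with
  | base => simp [ultraP]
  | succ n hn ih =>
    have hn' : (1 : ℝ) ≤ n := by exact_mod_cast hn
    rw [ultraP_eval_one_succ (by linarith) hν₀ hn]
    exact mul_pos (div_pos (by linarith) (by linarith)) ih

def casoratian (ν : ℝ) (m : ℕ) : ℝ[X] :=
  ultraQ ν (m + 1) * ultraP ν (m + 1) - ultraQ ν m * ultraP ν (m + 2)

lemma casoratian_succ (ν : ℝ) (m : ℕ) :
    casoratian ν (m + 1) = C (ultraBeta ν (m + 2)) * casoratian ν m := by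
  simp only [casoratian, ultraP, ultraQ]
  ring

lemma ultraQ_div_ultraP_sub (ν : ℝ) {m : ℕ} (hp₁ : (ultraP ν (m + 1)).eval 1 ≠ 0)
    (hp₂ : (ultraP ν (m + 2)).eval 1 ≠ 0) :
    (ultraQ ν (m + 1)).eval 1 / (ultraP ν (m + 2)).eval 1 -
        (ultraQ ν m).eval 1 / (ultraP ν (m + 1)).eval 1 =
      (casoratian ν m).eval 1 / ((ultraP ν (m + 1)).eval 1 * (ultraP ν (m + 2)).eval 1) := by
  simp only [casoratian, eval_sub, eval_mul]
  field_simp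

/-- The quotient of the theorem at `n = m + 1`, indexed so as to avoid the truncated `n - 1`. -/
def numeratorQuotient (ν : ℝ) (m : ℕ) : ℝ :=
  (ultraQ ν m).eval 1 / (ultraP ν (m + 1)).eval 1

lemma numeratorQuotient_one_sub_zero (hν : -(1 / 2) < ν) (hν₀ : ν ≠ 0) :
    numeratorQuotient ν 1 - numeratorQuotient ν 0 = 1 / (1 + 2 * ν) := by
  have h₁ : 1 + 2 * ν ≠ 0 := by linarith
  have h₂ : 1 + ν ≠ 0 := by linarith
  have hp₂ := ultraP_eval_one_succ (by linarith) hν₀ le_rfl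
  simp only [numeratorQuotient, zero_add, hp₂]
  simp only [ultraP, ultraQ, eval_X, eval_one, Nat.cast_one, mul_one]
  field_simp
  ring

lemma numeratorQuotient_sub_succ (hν : -(1 / 2) < ν) (hν₀ : ν ≠ 0) (m : ℕ) :
    numeratorQuotient ν (m + 2) - numeratorQuotient ν (m + 1) =
      (m + 2) / (m + 2 + 2 * ν) * (numeratorQuotient ν (m + 1) - numeratorQuotient ν m) := by
  have hpos (n : ℕ) : (ultraP ν (n + 1)).eval 1 ≠ 0 :=
    (ultraP_eval_one_pos hν hν₀ (Nat.le_add_left 1 n)).ne'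
  have hm : (0 : ℝ) ≤ m := m.cast_nonneg
  have hp₂ : (ultraP ν (m + 2)).eval 1 =
      (m + 1 + 2 * ν) / (2 * (m + 1 + ν)) * (ultraP ν (m + 1)).eval 1 := by
    rw [ultraP_eval_one_succ (by linarith) hν₀ (by omega : 1 ≤ m + 1)]
    push_cast
    ring
  have hp₃ : (ultraP ν (m + 3)).eval 1 =
      (m + 2 + 2 * ν) / (2 * (m + 2 + ν)) * (ultraP ν (m + 2)).eval 1 := by
    rw [ultraP_eval_one_succ (by linarith) hν₀ (by omega : 1 ≤ m + 2)]
    push_cast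
    ring
  have hm₂ : (m : ℝ) + 2 + ν ≠ 0 := by linarith
  have hβ : ultraBeta ν (m + 2) = (m + 2) * (m + 1 + 2 * ν) / (4 * (m + 2 + ν) * (m + 1 + ν)) := by
    rw [ultraBeta_succ]
    push_cast
    ring_nf
  simp only [numeratorQuotient]
  rw [ultraQ_div_ultraP_sub ν (hpos _) (hpos _), ultraQ_div_ultraP_sub ν (hpos _) (hpos _),
    casoratian_succ, eval_mul, eval_C, hp₃, hp₂, hβ]
  field_simp
  ring

lemma one_div_le_numeratorQuotient_sub (hν₁ : -(1 / 2) < ν) (hν₂ : ν ≤ 1 / 2) (hν₀ : ν ≠ 0)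
    (m : ℕ) : 1 / ((m : ℝ) + 2) ≤ numeratorQuotient ν (m + 1) - numeratorQuotient ν m := by
  induction m with
  | zero =>
    rw [numeratorQuotient_one_sub_zero hν₁ hν₀]
    exact one_div_le_one_div_of_le (by linarith) (by push_cast; linarith)
  | succ m ih =>
    have hm : (0 : ℝ) ≤ m := m.cast_nonneg
    rw [numeratorQuotient_sub_succ hν₁ hν₀]
    calc 1 / ((m + 1 : ℕ) + 2 : ℝ) ≤ 1 / (m + 2 + 2 * ν) :=
          one_div_le_one_div_of_le (by linarith) (by push_cast; linarith)
      _ = (m + 2) / (m + 2 + 2 * ν) * (1 / (m + 2)) := by field_simp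
      _ ≤ (m + 2) / (m + 2 + 2 * ν) * (numeratorQuotient ν (m + 1) - numeratorQuotient ν m) :=
          mul_le_mul_of_nonneg_left ih (div_nonneg (by linarith) (by linarith))

lemma sum_one_div_le_numeratorQuotient (hν₁ : -(1 / 2) < ν) (hν₂ : ν ≤ 1 / 2) (hν₀ : ν ≠ 0)
    (m : ℕ) : ∑ i ∈ Finset.range (m + 1), 1 / ((i : ℝ) + 1) ≤ numeratorQuotient ν m := by
  induction m with
  | zero => simp [numeratorQuotient, ultraP, ultraQ]
  | succ m ih =>
    have h := one_div_le_numeratorQuotient_sub hν₁ hν₂ hν₀ m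
    rw [Finset.sum_range_succ, Nat.cast_succ, add_assoc, one_add_one_eq_two]
    linarith

end Ultraspherical

open Ultraspherical in
theorem ultraspherical_numerator_quotient_divergent (ν : ℝ)
    (hν₁ : -(1 / 2) < ν) (hν₂ : ν ≤ 1 / 2) (hν₀ : ν ≠ 0) :
    (∀ n : ℕ, 1 ≤ n → 0 < (ultraP ν n).eval 1) ∧
    Tendsto (fun n : ℕ => (ultraQ ν (n - 1)).eval 1 / (ultraP ν n).eval 1) atTop atTop := by
  refine ⟨fun n hn => ultraP_eval_one_pos hν₁ hν₀ hn, ?_⟩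
  refine tendsto_atTop_mono' atTop ?_ Real.tendsto_sum_range_one_div_nat_succ_atTop
  filter_upwards [eventually_ge_atTop 1] with n hn
  obtain ⟨m, rfl⟩ := Nat.exists_eq_add_of_le' hn
  exact sum_one_div_le_numeratorQuotient hν₁ hν₂ hν₀ m

end
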